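/- arXiv:2410.22034 — 3 statements merged into one kernel-verified Lean document; each statement's English description precedes it below -/
import Mathlib

section
/- Let g be a gauge function of lower order than the identity, and let A ⊆ ℕ satisfy |A ∩ n| ≤ log₂( g(2^{-n}) / 2^{-n} ) for all but finitely many n (equivalently, 2^{-n + |A ∩ n|} ≤ g(2^{-n}) for all but finitely many n). Then for every y : 2^{<ω} → 2 and every Borel set B ⊆ [T_{A,y}] with μ_{A,y}(B) > 0, we have H^g(B) > 0. -/
open MeasureTheory Filter Set Topology
open scoped ENNReal

noncomputable section

/-- Cantor space `2^ω`: infinite binary sequences with the metric `d(x,y) = 2^{-n}`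
where `n` is the least index at which `x` and `y` differ (and `d(x,x) = 0`). -/
abbrev Cantor := ℕ → Bool

/-- The metric `d(x,y) = (1/2)^n`, `n` least with `x n ≠ y n`. -/
instance : MetricSpace Cantor := PiNat.metricSpace

/-- A gauge function `g : [0,∞) → [0,∞)`: increasing, continuous on the right,
`g 0 = 0`, and `g t > 0` for `t > 0`.  (Modelled on `ℝ`, with all conditions
imposed on `[0,∞)`.) -/
structure IsGauge (g : ℝ → ℝ) : Prop where
  mono : MonotoneOn g (Set.Ici 0)
  zero : g 0 = 0
  pos : ∀ t > 0, 0 < g t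
  rightCont : ∀ t ≥ 0, ContinuousWithinAt g (Set.Ici t) t

/-- The gauge measure `H^g` on a metric space: the Borel measure obtained from covers by
sets of small diameter, with each set of diameter `d` weighted by `g d`. -/
def gaugeMeasure {X : Type*} [EMetricSpace X] [MeasurableSpace X] [BorelSpace X]
    (g : ℝ → ℝ) : Measure X :=
  Measure.mkMetric (fun d => ENNReal.ofReal (g d.toReal))

/-- `g` has lower order than the identity: `g(t)/t → ∞` as `t → 0⁺`. -/
def LowerOrderThanId (g : ℝ → ℝ) : Prop :=
  Tendsto (fun t => g t / t) (𝓝[>] (0 : ℝ)) atTop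

/-- The cylinder set `[t] = {x ∈ 2^ω : x ⊃ t}` determined by a finite binary string `t`. -/
def cylinder (t : List Bool) : Set Cantor :=
  {x : Cantor | ∀ i, i < t.length → x i = t.getD i false}

/-- Membership in the tree `T_{A,y}`: `t ∈ T_{A,y}` iff for all `n < |t|`,
if `n ∈ A` then `t(n) = y(t↾n)`. -/
def inTree (A : Set ℕ) (y : List Bool → Bool) (t : List Bool) : Prop :=
  ∀ n ∈ A, n < t.length → t.getD n false = y (t.take n)

/-- The set `[T_{A,y}]` of infinite branches of the tree `T_{A,y}`. -/
def branches (A : Set ℕ) (y : List Bool → Bool) : Set Cantor :=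
  {x : Cantor | ∀ n ∈ A, x n = y ((List.range n).map x)}

/-- `μ` is the uniform measure `μ_{A,y}` on `[T_{A,y}]`: the Borel probability measure
concentrated on `[T_{A,y}]` giving each cylinder `[t]`, for `t ∈ T_{A,y}` of length `n`,
measure `2^{-n + |A ∩ n|}`. -/
structure IsUniformTreeMeasure (A : Set ℕ) (y : List Bool → Bool) (μ : Measure Cantor) :
    Prop where
  prob : IsProbabilityMeasure μ
  full : μ (branches A y) = 1
  cylMeas : ∀ t : List Bool, inTree A y t →
    μ (cylinder t) = (2 : ℝ≥0∞)⁻¹ ^ (t.length - (A ∩ Set.Iio t.length).ncard)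


/-!
A mass distribution argument. A cylinder of length `m` through a branch of `T_{A,y}` has
`μ`-mass `2^{-m+|A∩m|}`, at most twice the mass `2^{-(m+1)+|A∩(m+1)|}` of the next level, which
the hypothesis on `A` bounds by `g(2^{-(m+1)})`. A set of diameter `d` with
`2^{-(m+1)} < d ≤ 2^{-m}` that meets the branches lies in one such cylinder, so its mass is at
most `2 g(d)`; points are `μ`-null since `g(2^{-m}) → 0`. Hence `μ ≤ 2 H^g` on all sets.
-/

lemma getD_map_range (x : Cantor) {m i : ℕ} (h : i < m) :
    ((List.range m).map x).getD i false = x i := by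
  simp [List.getElem?_range h]

lemma take_map_range (x : Cantor) {m n : ℕ} (h : n ≤ m) :
    ((List.range m).map x).take n = (List.range n).map x := by
  rw [← List.map_take, List.take_range, Nat.min_eq_left h]

lemma cylinder_map_range (x : Cantor) (m : ℕ) :
    _root_.cylinder ((List.range m).map x) = PiNat.cylinder x m := by
  ext u
  simp only [_root_.cylinder, PiNat.cylinder, mem_ofPred_eq, List.length_map, List.length_range]
  exact forall₂_congr fun i hi => by rw [getD_map_range x hi]

lemma isClosed_branches (A : Set ℕ) (y : List Bool → Bool) : IsClosed (branches A y) := by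
  have hconst (n : ℕ) : IsLocallyConstant fun x : Cantor => y ((List.range n).map x) := by
    refine (IsLocallyConstant.iff_exists_open _).2 fun x =>
      ⟨PiNat.cylinder x n, PiNat.isOpen_cylinder _ x n, PiNat.self_mem_cylinder x n, ?_⟩
    intro u hu
    rw [List.map_inj_left.2 fun i hi => hu i (List.mem_range.1 hi)]
  simpa only [branches, ofPred_forall] using
    isClosed_biInter fun n _ => isClosed_eq (continuous_apply n) (hconst n).continuous

lemma ncard_inter_Iio_le (A : Set ℕ) (m : ℕ) : (A ∩ Iio m).ncard ≤ m :=
  (ncard_le_ncard inter_subset_right (finite_Iio m)).trans_eq (ncard_Iio_nat m)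

lemma inTree_map_range {A : Set ℕ} {y : List Bool → Bool} {x : Cantor}
    (hx : x ∈ branches A y) (m : ℕ) : inTree A y ((List.range m).map x) := by
  intro n hn hlt
  rw [List.length_map, List.length_range] at hlt
  rw [getD_map_range x hlt, take_map_range x hlt.le]
  exact hx n hn

lemma Cantor.subset_cylinder_of_diam_le {s : Set Cantor} {x : Cantor} (hx : x ∈ s) {m : ℕ}
    (hs : Metric.diam s ≤ (1 / 2) ^ m) : s ⊆ PiNat.cylinder x m := fun _ hu =>
  PiNat.mem_cylinder_iff_dist_le.2 <|
    (Metric.dist_le_diam_of_mem (isCompact_univ.isBounded.subset (subset_univ s)) hu hx).trans hs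

lemma two_zpow_neg_natCast (n : ℕ) : (2 : ℝ) ^ (-(n : ℤ)) = (1 / 2) ^ n := by
  rw [zpow_neg, zpow_natCast, one_div, inv_pow]

lemma ENNReal.inv_two_pow_sub (m c : ℕ) (h : c ≤ m) :
    (2 : ℝ≥0∞)⁻¹ ^ (m - c) = ENNReal.ofReal ((2 : ℝ) ^ (-(m : ℤ) + c)) := by
  obtain ⟨k, rfl⟩ := Nat.exists_eq_add_of_le h
  rw [Nat.add_sub_cancel_left, Nat.cast_add, neg_add, add_right_comm, neg_add_cancel, zero_add,
    two_zpow_neg_natCast, ENNReal.ofReal_pow (by norm_num), one_div,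
    ENNReal.ofReal_inv_of_pos two_pos, ENNReal.ofReal_ofNat]

namespace IsUniformTreeMeasure

variable {A : Set ℕ} {y : List Bool → Bool} {μ : Measure Cantor}

lemma measure_compl_branches (hμ : IsUniformTreeMeasure A y μ) : μ (branches A y)ᶜ = 0 := by
  have := hμ.prob
  rw [prob_compl_eq_zero_iff (isClosed_branches A y).measurableSet]
  exact hμ.full

lemma measure_piNat_cylinder (hμ : IsUniformTreeMeasure A y μ) {x : Cantor}
    (hx : x ∈ branches A y) (m : ℕ) :
    μ (PiNat.cylinder x m) = ENNReal.ofReal ((2 : ℝ) ^ (-(m : ℤ) + (A ∩ Iio m).ncard)) := by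
  rw [← cylinder_map_range, hμ.cylMeas _ (inTree_map_range hx m), List.length_map,
    List.length_range, ENNReal.inv_two_pow_sub _ _ (ncard_inter_Iio_le A m)]

lemma measure_piNat_cylinder_le (hμ : IsUniformTreeMeasure A y μ) {g : ℝ → ℝ} {x : Cantor}
    (hx : x ∈ branches A y) {m : ℕ}
    (hm : (2 : ℝ) ^ (-((m + 1 : ℕ) : ℤ) + ((A ∩ Iio (m + 1)).ncard : ℤ)) ≤
      g ((2 : ℝ) ^ (-((m + 1 : ℕ) : ℤ)))) :
    μ (PiNat.cylinder x m) ≤ 2 * ENNReal.ofReal (g ((1 / 2) ^ (m + 1))) := by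
  have hc : (A ∩ Iio m).ncard ≤ (A ∩ Iio (m + 1)).ncard :=
    ncard_le_ncard (inter_subset_inter_right _ (Iio_subset_Iio m.le_succ))
      ((finite_Iio _).inter_of_right _)
  rw [measure_piNat_cylinder hμ hx, ← two_zpow_neg_natCast, ← ENNReal.ofReal_ofNat 2,
    ← ENNReal.ofReal_mul zero_le_two]
  refine ENNReal.ofReal_le_ofReal ?_
  calc (2 : ℝ) ^ (-(m : ℤ) + (A ∩ Iio m).ncard)
      ≤ 2 * 2 ^ (-((m + 1 : ℕ) : ℤ) + ((A ∩ Iio (m + 1)).ncard : ℤ)) := by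
        rw [← zpow_one_add₀ two_ne_zero]
        exact zpow_le_zpow_right₀ one_le_two (by push_cast; omega)
    _ ≤ 2 * g ((2 : ℝ) ^ (-((m + 1 : ℕ) : ℤ))) := by gcongr

end IsUniformTreeMeasure

namespace IsGauge

variable {g : ℝ → ℝ}

lemma tendsto_half_pow (hg : IsGauge g) :
    Tendsto (fun m : ℕ => g ((1 / 2) ^ m)) atTop (𝓝 0) := by
  have hpow : Tendsto (fun m : ℕ => (1 / 2 : ℝ) ^ m) atTop (𝓝[≥] 0) :=
    tendsto_nhdsWithin_of_tendsto_nhds_of_eventually_within _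
      (tendsto_pow_atTop_nhds_zero_of_lt_one (by norm_num) (by norm_num))
      (Eventually.of_forall fun m => mem_Ici.2 (by positivity))
  exact hg.zero ▸ (hg.rightCont 0 le_rfl).tendsto.comp hpow

variable {μ : Measure Cantor} {S : Set Cantor} {C : ℝ≥0∞} {N : ℕ}

lemma measure_le_of_diam_le (hg : IsGauge g) (hS : μ Sᶜ = 0) (hC : C ≠ ⊤)
    (hcyl : ∀ x ∈ S, ∀ m ≥ N,
      μ (PiNat.cylinder x m) ≤ C * ENNReal.ofReal (g ((1 / 2) ^ (m + 1))))
    {s : Set Cantor} (hs : Metric.diam s ≤ (1 / 2) ^ N) :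
    μ s ≤ C * ENNReal.ofReal (g (Metric.diam s)) := by
  rcases (s ∩ S).eq_empty_or_nonempty with hsS | ⟨x, hxs, hxS⟩
  · exact (measure_mono_null (fun u hu huS => hsS.subset ⟨hu, huS⟩) hS).trans_le zero_le
  have hbound (m : ℕ) (hm : N ≤ m) (hsm : Metric.diam s ≤ (1 / 2) ^ m) :
      μ s ≤ C * ENNReal.ofReal (g ((1 / 2) ^ (m + 1))) :=
    (measure_mono (Cantor.subset_cylinder_of_diam_le hxs hsm)).trans (hcyl x hxS m hm)
  rcases (Metric.diam_nonneg (s := s)).eq_or_lt with hd | hd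
  · have hlim :
        Tendsto (fun m : ℕ => C * ENNReal.ofReal (g ((1 / 2) ^ (m + 1)))) atTop (𝓝 0) := by
      simpa using ENNReal.Tendsto.const_mul
        (ENNReal.tendsto_ofReal (hg.tendsto_half_pow.comp (tendsto_add_atTop_nat 1))) (Or.inr hC)
    rw [← hd, hg.zero, ENNReal.ofReal_zero, mul_zero]
    exact ge_of_tendsto hlim <|
      eventually_atTop.2 ⟨N, fun m hm => hbound m hm (hd ▸ by positivity)⟩
  · obtain ⟨m, hlt, hle⟩ := exists_nat_pow_near_of_lt_one hd
      (hs.trans (pow_le_one₀ (by norm_num) (by norm_num))) (by norm_num : (0 : ℝ) < 1 / 2)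
      (by norm_num)
    have hm : N ≤ m := Nat.lt_succ_iff.1 <|
      (pow_lt_pow_iff_right_of_lt_one₀ (by norm_num) (by norm_num)).1 (hlt.trans_le hs)
    exact (hbound m hm hle).trans (mul_le_mul_right (ENNReal.ofReal_le_ofReal
      (hg.mono (mem_Ici.2 (by positivity)) (mem_Ici.2 Metric.diam_nonneg) hlt.le)) C)

lemma inv_smul_le_gaugeMeasure (hg : IsGauge g) (hS : μ Sᶜ = 0) (hC : C ≠ ⊤)
    (hcyl : ∀ x ∈ S, ∀ m ≥ N,
      μ (PiNat.cylinder x m) ≤ C * ENNReal.ofReal (g ((1 / 2) ^ (m + 1)))) :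
    C⁻¹ • μ ≤ gaugeMeasure g := by
  refine Measure.le_mkMetric _ _ (ENNReal.ofReal ((1 / 2) ^ N)) (by positivity) fun s hs => ?_
  have hs' : Metric.diam s ≤ (1 / 2) ^ N := ENNReal.toReal_le_of_le_ofReal (by positivity) hs
  calc (C⁻¹ • μ) s = C⁻¹ * μ s := rfl
    _ ≤ C⁻¹ * (C * ENNReal.ofReal (g (Metric.diam s))) :=
      mul_le_mul_right (hg.measure_le_of_diam_le hS hC hcyl hs') _
    _ ≤ ENNReal.ofReal (g (Metric.diam s)) := by
      rw [← mul_assoc]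
      exact mul_le_of_le_one_left' (ENNReal.inv_mul_le_one C)

end IsGauge

theorem sparse_tree_positive_gauge_general (g : ℝ → ℝ) (hg : IsGauge g) (A : Set ℕ)
    (hA : ∀ᶠ n : ℕ in atTop,
      (2 : ℝ) ^ (-(n : ℤ) + ((A ∩ Set.Iio n).ncard : ℤ)) ≤ g ((2 : ℝ) ^ (-(n : ℤ))))
    (y : List Bool → Bool) (μ : Measure Cantor) (hμ : IsUniformTreeMeasure A y μ)
    (B : Set Cantor) (hB : 0 < μ B) :
    0 < gaugeMeasure g B := by
  obtain ⟨N, hN⟩ := eventually_atTop.1 hA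
  have hle : (2 : ℝ≥0∞)⁻¹ • μ ≤ gaugeMeasure g :=
    hg.inv_smul_le_gaugeMeasure (N := N) hμ.measure_compl_branches ENNReal.ofNat_ne_top
      fun x hx m hm => hμ.measure_piNat_cylinder_le hx (hN (m + 1) (by omega))
  calc 0 < (2 : ℝ≥0∞)⁻¹ * μ B := ENNReal.mul_pos (by norm_num) hB.ne'
    _ ≤ gaugeMeasure g B := hle B

/-- If `g` is a gauge of lower order than the identity and `A ⊆ ℕ` satisfies
`2^{-n+|A∩n|} ≤ g(2^{-n})` for all but finitely many `n`, then for every `y` and every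
Borel `B ⊆ [T_{A,y}]` with `μ_{A,y}(B) > 0` we have `H^g(B) > 0`. -/
theorem sparse_tree_positive_gauge (g : ℝ → ℝ) (hg : IsGauge g)
    (hlo : LowerOrderThanId g) (A : Set ℕ)
    (hA : ∀ᶠ n : ℕ in atTop,
      (2 : ℝ) ^ (-(n : ℤ) + ((A ∩ Set.Iio n).ncard : ℤ)) ≤ g ((2 : ℝ) ^ (-(n : ℤ))))
    (y : List Bool → Bool) (μ : Measure Cantor) (hμ : IsUniformTreeMeasure A y μ)
    (B : Set Cantor) (hBm : MeasurableSet B) (hBsub : B ⊆ branches A y)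
    (hB : 0 < μ B) :
    0 < gaugeMeasure g B :=
  sparse_tree_positive_gauge_general g hg A hA y μ hμ B hB
end
end

section
/- Let (X₁,d₁) and (X₂,d₂) be metric spaces, let g be a gauge function, let h : [0,∞) → [0,∞) be continuous and strictly increasing with h(0) = 0, and let k ∈ ℕ. Suppose f : X₁ → X₂ has the property that for every set A ⊆ X₁, the image f(A) can be covered by at most k sets of d₂-diameter at most h(diam_{d₁}(A)). Then for every set B ⊆ X₁, H^{g∘h^{-1}}(f(B)) ≤ k · H^g(B), where h^{-1} is the inverse function of h. -/
open MeasureTheory Filter Set Topology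
open scoped ENNReal

noncomputable section

/-! Cover every set `A` of a fine cover of `B` as in the hypothesis: the `k` pieces covering
`f '' A` have diameter at most `h (diam A)`, which is small together with `diam A` by continuity
of `h` at `0`, and weight `g (h⁻¹ (diam piece)) ≤ g (diam A)` by the intermediate value theorem.
So the image cover is again fine and costs at most `k` times the original one. At the level of
the premeasures `mkMetric'.pre` this is the outer-measure inequality
`comap f (pre m₂ r) ≤ k • pre m₁ ε`, which only has to be checked on sets of diameter `≤ ε`. -/

namespace MeasureTheory

variable {X Y : Type*} [EMetricSpace X] [EMetricSpace Y]

namespace OuterMeasure.mkMetric'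

theorem smul_pre {m : Set X → ℝ≥0∞} {c : ℝ≥0∞} (hc0 : c ≠ 0) (hc : c ≠ ∞) (r : ℝ≥0∞) :
    c • pre m r = pre (c • m) r := by
  simp only [pre, smul_boundedBy hc, ennreal_smul_extend _ hc0]
  rfl

theorem pre_le_card_mul {ι : Type*} [Fintype ι] {m : Set X → ℝ≥0∞} {r a : ℝ≥0∞} {S : Set X}
    {t : ι → Set X} (hS : S ⊆ ⋃ i, t i) (ht : ∀ i, Metric.ediam (t i) ≤ r)
    (hm : ∀ i, m (t i) ≤ a) : pre m r S ≤ Fintype.card ι * a :=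
  calc pre m r S ≤ ∑ i, pre m r (t i) := (measure_mono hS).trans (measure_iUnion_fintype_le _ _)
    _ ≤ ∑ _ : ι, a := Finset.sum_le_sum fun i _ => (pre_le (ht i)).trans (hm i)
    _ = Fintype.card ι * a := by simp

end OuterMeasure.mkMetric'

open OuterMeasure mkMetric' in
theorem OuterMeasure.mkMetric'_image_le {m₁ : Set X → ℝ≥0∞} {m₂ : Set Y → ℝ≥0∞} {c : ℝ≥0∞}
    (hc0 : c ≠ 0) (hc : c ≠ ∞) {f : X → Y}
    (H : ∀ r > 0, ∃ ε > 0, ∀ A : Set X, Metric.ediam A ≤ ε → pre m₂ r (f '' A) ≤ c * m₁ A)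
    (B : Set X) : mkMetric' m₂ (f '' B) ≤ c * mkMetric' m₁ B := by
  simp only [mkMetric', iSup_apply]
  refine iSup₂_le fun r hr => ?_
  obtain ⟨ε, hε, hA⟩ := H r hr
  have hcomap : comap f (pre m₂ r) ≤ c • pre m₁ ε := by
    rw [smul_pre hc0 hc]
    exact le_pre.2 hA
  calc pre m₂ r (f '' B) = comap f (pre m₂ r) B := (comap_apply _ _ _).symm
    _ ≤ c * pre m₁ ε B := hcomap B
    _ ≤ c * ⨆ ε > 0, pre m₁ ε B := by gcongr; exact le_iSup₂_of_le ε hε le_rfl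

theorem Measure.mkMetric_image_le [MeasurableSpace X] [BorelSpace X]
    [MeasurableSpace Y] [BorelSpace Y] {m₁ m₂ : ℝ≥0∞ → ℝ≥0∞} {ρ : ℝ≥0∞ → ℝ≥0∞}
    (hρ : Tendsto ρ (𝓝 0) (𝓝 0)) {k : ℕ} {f : X → Y}
    (H : ∀ A : Set X, Metric.ediam A ≠ ∞ → ∃ t : Fin k → Set Y, f '' A ⊆ ⋃ i, t i ∧
      ∀ i, Metric.ediam (t i) ≤ ρ (Metric.ediam A) ∧ m₂ (Metric.ediam (t i)) ≤ m₁ (Metric.ediam A))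
    (B : Set X) : mkMetric m₂ (f '' B) ≤ k * mkMetric m₁ B := by
  rcases B.eq_empty_or_nonempty with rfl | ⟨x, -⟩
  · simp
  have hk : k ≠ 0 := by
    rintro rfl
    obtain ⟨t, hxt, -⟩ := H {x} (by simp)
    simpa using hxt (mem_image_of_mem f (mem_singleton x))
  rw [← OuterMeasure.coe_mkMetric, ← OuterMeasure.coe_mkMetric]
  refine OuterMeasure.mkMetric'_image_le (Nat.cast_ne_zero.2 hk) (ENNReal.natCast_ne_top k)
    (fun r hr => ?_) B
  obtain ⟨ε, hε, hsmall⟩ := ENNReal.nhds_zero_basis_Iic.eventually_iff.1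
    ((hρ.eventually (gt_mem_nhds hr)).and (gt_mem_nhds zero_lt_one))
  refine ⟨ε, hε, fun A hA => ?_⟩
  obtain ⟨hρA, hA1⟩ := hsmall hA
  obtain ⟨t, hft, ht⟩ := H A hA1.ne_top
  simpa using OuterMeasure.mkMetric'.pre_le_card_mul hft (fun i => (ht i).1.trans hρA.le)
    (fun i => (ht i).2)

end MeasureTheory

theorem inv_mem_Icc_of_mem_uIcc {h hinv : ℝ → ℝ} (hcont : ContinuousOn h (Ici 0)) (h0 : h 0 = 0)
    (hinv_h : ∀ t ≥ (0 : ℝ), hinv (h t) = t) {a s : ℝ} (ha : 0 ≤ a) (hs : s ∈ uIcc 0 (h a)) :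
    hinv s ∈ Icc 0 a := by
  rw [← h0] at hs
  have hsub : uIcc 0 a ⊆ Ici 0 := by
    rw [uIcc_of_le ha]
    exact Icc_subset_Ici_self
  obtain ⟨w, hw, rfl⟩ := intermediate_value_uIcc (hcont.mono hsub) hs
  rw [uIcc_of_le ha] at hw
  rwa [hinv_h w hw.1]

theorem ofReal_comp_inv_le {g h hinv : ℝ → ℝ} (hg : MonotoneOn g (Ici 0))
    (hcont : ContinuousOn h (Ici 0)) (h0 : h 0 = 0) (hinv_h : ∀ t ≥ (0 : ℝ), hinv (h t) = t)
    {d e : ℝ≥0∞} (hd : d ≤ ENNReal.ofReal (h e.toReal)) :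
    ENNReal.ofReal ((g ∘ hinv) d.toReal) ≤ ENNReal.ofReal (g e.toReal) := by
  have hd' : ENNReal.ofReal d.toReal ≤ ENNReal.ofReal (h e.toReal) := by
    rwa [ENNReal.ofReal_toReal (ne_top_of_le_ne_top ENNReal.ofReal_ne_top hd)]
  have hs : d.toReal ∈ uIcc 0 (h e.toReal) := by
    rcases ENNReal.ofReal_le_ofReal_iff'.1 hd' with hle | hle
    · exact mem_uIcc.2 (Or.inl ⟨ENNReal.toReal_nonneg, hle⟩)
    · rw [le_antisymm hle ENNReal.toReal_nonneg]
      exact left_mem_uIcc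
  have hinv_mem := inv_mem_Icc_of_mem_uIcc hcont h0 hinv_h ENNReal.toReal_nonneg hs
  exact ENNReal.ofReal_le_ofReal (hg hinv_mem.1 ENNReal.toReal_nonneg hinv_mem.2)

theorem tendsto_ofReal_comp_toReal {h : ℝ → ℝ} (hcont : ContinuousWithinAt h (Ici 0) 0)
    (h0 : h 0 = 0) : Tendsto (fun d : ℝ≥0∞ => ENNReal.ofReal (h d.toReal)) (𝓝 0) (𝓝 0) := by
  have htoReal : Tendsto ENNReal.toReal (𝓝 0) (𝓝[≥] 0) :=
    tendsto_nhdsWithin_iff.2 ⟨by simpa using ENNReal.tendsto_toReal ENNReal.zero_ne_top,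
      Eventually.of_forall fun _ => ENNReal.toReal_nonneg⟩
  simpa [h0] using ENNReal.tendsto_ofReal (hcont.tendsto.comp htoReal)

theorem gauge_measure_image_le_general {X₁ X₂ : Type*}
    [MetricSpace X₁] [MeasurableSpace X₁] [BorelSpace X₁]
    [MetricSpace X₂] [MeasurableSpace X₂] [BorelSpace X₂]
    (g : ℝ → ℝ) (hg : IsGauge g)
    (h hinv : ℝ → ℝ)
    (hcont : ContinuousOn h (Set.Ici 0))
    (h0 : h 0 = 0)
    (hinv_h : ∀ t ≥ (0 : ℝ), hinv (h t) = t)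
    (k : ℕ) (f : X₁ → X₂)
    (hcov : ∀ A : Set X₁, EMetric.diam A ≠ ⊤ → ∃ c : Fin k → Set X₂,
      f '' A ⊆ ⋃ i, c i ∧
      ∀ i, EMetric.diam (c i) ≤ ENNReal.ofReal (h (EMetric.diam A).toReal))
    (B : Set X₁) :
    gaugeMeasure (g ∘ hinv) (f '' B) ≤ (k : ℝ≥0∞) * gaugeMeasure g B := by
  refine Measure.mkMetric_image_le (tendsto_ofReal_comp_toReal (hcont 0 self_mem_Ici) h0)
    (fun A hA => ?_) B
  obtain ⟨c, hfc, hc⟩ := hcov A hA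
  exact ⟨c, hfc, fun i => ⟨hc i, ofReal_comp_inv_le hg.mono hcont h0 hinv_h (hc i)⟩⟩

/-- If `f : X₁ → X₂` is such that the image of every (bounded) set `A` can be covered by at
most `k` sets of diameter at most `h(diam A)`, where `h` is continuous, strictly increasing
with `h 0 = 0` (and maps `[0,∞)` onto `[0,∞)`, with inverse `hinv`), then
`H^{g ∘ h⁻¹}(f(B)) ≤ k · H^g(B)` for every `B`. -/
theorem gauge_measure_image_le {X₁ X₂ : Type*}
    [MetricSpace X₁] [MeasurableSpace X₁] [BorelSpace X₁]
    [MetricSpace X₂] [MeasurableSpace X₂] [BorelSpace X₂]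
    (g : ℝ → ℝ) (hg : IsGauge g)
    (h hinv : ℝ → ℝ)
    (hcont : ContinuousOn h (Set.Ici 0)) (hmono : StrictMonoOn h (Set.Ici 0))
    (h0 : h 0 = 0) (hsurj : Set.SurjOn h (Set.Ici 0) (Set.Ici 0))
    (hinv_h : ∀ t ≥ (0 : ℝ), hinv (h t) = t)
    (k : ℕ) (f : X₁ → X₂)
    (hcov : ∀ A : Set X₁, EMetric.diam A ≠ ⊤ → ∃ c : Fin k → Set X₂,
      f '' A ⊆ ⋃ i, c i ∧
      ∀ i, EMetric.diam (c i) ≤ ENNReal.ofReal (h (EMetric.diam A).toReal))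
    (B : Set X₁) :
    gaugeMeasure (g ∘ hinv) (f '' B) ≤ (k : ℝ≥0∞) * gaugeMeasure g B :=
  gauge_measure_image_le_general g hg h hinv hcont h0 hinv_h k f hcov B
end
end

section
/- For every n ≥ 1 there is a Borel bijection f : 2^ω → [0,1]^n such that for every set A ⊆ 2^ω and every gauge function g, H^g(A) > 0 if and only if H^{g∘h^{-1}}(f(A)) > 0, where h(t) = t^{1/n} (so g∘h^{-1}(t) = g(t^n)). Here [0,1]^n carries the Euclidean metric and 2^ω the metric d(x,y) = 2^{-n} for n the least differing bit. -/
open MeasureTheory Filter Set Topology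
open scoped ENNReal

noncomputable section

/-- The unit cube `[0,1]^n` inside `ℝ^n` with the Euclidean metric. -/
def unitCube (n : ℕ) : Set (EuclideanSpace ℝ (Fin n)) :=
  {p | ∀ i, p i ∈ Set.Icc (0 : ℝ) 1}

/-!
Split `x ∈ 2^ω` into the `n` interleaved strands `k ↦ x (k * n + i)` and let `B x ∈ [0,1]^n` have
the binary values of the strands as coordinates. Points agreeing on `N` digits have strands
agreeing on about `N / n` digits, so `dist (B x) (B y) ^ n ≤ 2^(n²+n) d(x,y)`; conversely, a set of
diameter `d ∈ ((1/2)^(k+1), (1/2)^k]` fixes the first `k + 1` digits of every strand up to six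
choices, so its preimage is covered by `6^n` cylinders of diameter `≤ d^n`. A gauge need not be
doubling, so constants cannot be pushed inside `g`; instead each set of a cover is split into a
bounded number of pieces (subcylinders in one direction, the `6^n` cylinders in the other), which
makes `H^{g(t^n)}(B A)` and `H^g(A)` comparable up to constant factors when `B` is injective on `A`.

`B` is not injective: binary expansions of dyadic rationals come in pairs. Rerouting the countable
set of eventually constant sequences through a bijection onto their binary values gives a Borel
bijection `f : 2^ω → [0,1]^n`. On each level set of `f - B`, which takes countably many values,
`f` is a translate of `B`, so null sets correspond.
-/

namespace MeasureTheory.Measure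

theorem mkMetric_le_mul_of_forall_cover {X Y ι : Type*} [EMetricSpace X] [MeasurableSpace X]
    [BorelSpace X] [EMetricSpace Y] [MeasurableSpace Y] [BorelSpace Y] [Countable ι]
    {m₁ m₂ : ℝ≥0∞ → ℝ≥0∞} (hm₁ : m₁ 0 = 0) {C : ℝ≥0∞} (hC₀ : C ≠ 0) (hC : C ≠ ∞)
    {Φ : Set X → Set Y} {s : Set X} {t : Set Y}
    (hΦ : ∀ u : ℕ → Set X, s ⊆ ⋃ k, u k → t ⊆ ⋃ k, Φ (u k))
    (H : ∀ r > 0, ∃ r' > 0, ∀ U, Metric.ediam U ≤ r' → ∃ V : ι → Set Y, Φ U ⊆ ⋃ i, V i ∧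
      (∀ i, Metric.ediam (V i) ≤ r) ∧ ∑' i, m₂ (Metric.ediam (V i)) ≤ C * m₁ (Metric.ediam U)) :
    mkMetric m₂ t ≤ C * mkMetric m₁ s := by
  have : Encodable (ℕ × ι) := Encodable.ofCountable _
  simp only [mkMetric_apply, ENNReal.mul_iSup, ENNReal.mul_iInf_of_ne hC₀ hC,
    ← ENNReal.tsum_mul_left]
  refine iSup₂_le fun r hr => ?_
  obtain ⟨r', hr', H⟩ := H r hr
  refine le_iSup₂_of_le r' hr' <| le_iInf₂ fun u hu => le_iInf fun hur' => ?_
  choose V hVcover hVdiam hVsum using fun k => H (u k) (hur' k)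
  set W : ℕ → Set Y := fun j => ⋃ b ∈ Encodable.decode₂ (ℕ × ι) j, V b.1 b.2
  refine iInf₂_le_of_le W ?_ (iInf_le_of_le (fun j => ?_) ?_)
  · rw [Encodable.iUnion_decode₂, iUnion_prod']
    exact (hΦ u hu).trans (iUnion_mono fun k => hVcover k)
  · rw [Metric.ediam_iUnion_mem_option]
    exact iSup₂_le fun b _ => hVdiam b.1 b.2
  calc ∑' j, ⨆ _ : (W j).Nonempty, m₂ (Metric.ediam (W j))
      = ∑' b : ℕ × ι, ⨆ _ : (V b.1 b.2).Nonempty, m₂ (Metric.ediam (V b.1 b.2)) :=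
        tsum_iUnion_decode₂ (fun S => ⨆ _ : S.Nonempty, m₂ (Metric.ediam S)) (by simp) _
    _ ≤ ∑' b : ℕ × ι, m₂ (Metric.ediam (V b.1 b.2)) :=
        ENNReal.tsum_le_tsum fun b => iSup_le fun _ => le_rfl
    _ = ∑' k, ∑' i, m₂ (Metric.ediam (V k i)) :=
        ENNReal.tsum_prod (f := fun k i => m₂ (Metric.ediam (V k i)))
    _ ≤ ∑' k, ⨆ _ : (u k).Nonempty, C * m₁ (Metric.ediam (u k)) := by
        refine ENNReal.tsum_le_tsum fun k => (hVsum k).trans ?_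
        rcases (u k).eq_empty_or_nonempty with hk | hk
        · simp [hk, hm₁]
        · simp [hk]

theorem mkMetric_image_of_isometry {X Y : Type*} [EMetricSpace X]
    [MeasurableSpace X] [BorelSpace X] [EMetricSpace Y] [MeasurableSpace Y] [BorelSpace Y]
    (m : ℝ≥0∞ → ℝ≥0∞) {f : X → Y} (hf : Isometry f) (hf' : Function.Surjective f) (s : Set X) :
    mkMetric m (f '' s) = mkMetric m s := by
  rw [← OuterMeasure.coe_mkMetric, ← OuterMeasure.coe_mkMetric, ← OuterMeasure.comap_apply,
    OuterMeasure.isometry_comap_mkMetric m hf (Or.inr hf')]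

end MeasureTheory.Measure

theorem EuclideanSpace.dist_le_card_mul {n : ℕ} {p q : EuclideanSpace ℝ (Fin n)} {δ : ℝ}
    (hδ : 0 ≤ δ) (h : ∀ i, dist (p i) (q i) ≤ δ) : dist p q ≤ n * δ := by
  rw [EuclideanSpace.dist_eq]
  refine Real.sqrt_le_iff.2 ⟨by positivity, ?_⟩
  have hn : (n : ℝ) ≤ n ^ 2 := by exact_mod_cast Nat.le_self_pow two_ne_zero n
  calc ∑ i, dist (p i) (q i) ^ 2 ≤ ∑ _i : Fin n, δ ^ 2 :=
        Finset.sum_le_sum fun i _ => pow_le_pow_left₀ dist_nonneg (h i) 2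
    _ = n * δ ^ 2 := by simp
    _ ≤ (n * δ) ^ 2 := by nlinarith [sq_nonneg δ]

namespace Cantor

def binaryValue (s : ℕ → Bool) : ℝ := Real.ofDigits fun k => cond (s k) (1 : Fin 2) 0

def prefixValue (s : ℕ → Bool) : ℕ → ℕ
  | 0 => 0
  | k + 1 => 2 * prefixValue s k + (s k).toNat

theorem prefixValue_congr {s t : ℕ → Bool} {k : ℕ} (h : ∀ i < k, s i = t i) :
    prefixValue s k = prefixValue t k := by
  induction k with
  | zero => rfl
  | succ k ih =>
    simp only [prefixValue, h k k.lt_succ_self, ih fun i hi => h i (hi.trans k.lt_succ_self)]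

theorem eq_of_prefixValue_eq {s t : ℕ → Bool} {k : ℕ} (h : prefixValue s k = prefixValue t k) :
    ∀ i < k, s i = t i := by
  induction k with
  | zero => intro i hi; omega
  | succ k ih =>
    simp only [prefixValue] at h
    have hs := Bool.toNat_lt (s k)
    have ht := Bool.toNat_lt (t k)
    intro i hi
    rcases (Nat.lt_succ_iff_lt_or_eq.1 hi) with hi | rfl
    · exact ih (by omega) i hi
    · have hk : (s i).toNat = (t i).toNat := by omega
      revert hk
      cases s i <;> cases t i <;> decide

theorem sum_ofDigitsTerm_eq_prefixValue (s : ℕ → Bool) (k : ℕ) :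
    ∑ i ∈ Finset.range k, Real.ofDigitsTerm (fun k => cond (s k) (1 : Fin 2) 0) i =
      prefixValue s k / 2 ^ k := by
  induction k with
  | zero => simp [prefixValue]
  | succ k ih =>
    have hdigit : (((cond (s k) 1 0 : Fin 2) : ℕ) : ℝ) = (s k).toNat := by cases s k <;> rfl
    rw [Finset.sum_range_succ, ih, Real.ofDigitsTerm, hdigit, prefixValue]
    push_cast
    field_simp
    ring

theorem binaryValue_eq (s : ℕ → Bool) (k : ℕ) :
    binaryValue s = (prefixValue s k + binaryValue (fun i => s (i + k))) / 2 ^ k := by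
  rw [binaryValue, Real.ofDigits_eq_sum_add_ofDigits _ k, sum_ofDigitsTerm_eq_prefixValue]
  simp only [Nat.cast_ofNat, binaryValue]
  ring

theorem binaryValue_nonneg (s : ℕ → Bool) : 0 ≤ binaryValue s := Real.ofDigits_nonneg _

theorem binaryValue_le_one (s : ℕ → Bool) : binaryValue s ≤ 1 := Real.ofDigits_le_one _

theorem prefixValue_div_le_binaryValue (s : ℕ → Bool) (k : ℕ) :
    prefixValue s k / 2 ^ k ≤ binaryValue s := by
  rw [binaryValue_eq s k]
  gcongr
  exact le_add_of_nonneg_right (binaryValue_nonneg _)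

theorem binaryValue_le_prefixValue_add_one_div (s : ℕ → Bool) (k : ℕ) :
    binaryValue s ≤ (prefixValue s k + 1) / 2 ^ k := by
  rw [binaryValue_eq s k]
  gcongr
  exact binaryValue_le_one _

theorem abs_binaryValue_sub_le {s t : ℕ → Bool} {k : ℕ} (h : ∀ i < k, s i = t i) :
    |binaryValue s - binaryValue t| ≤ (2 ^ k)⁻¹ := by
  simpa [binaryValue] using Real.abs_ofDigits_sub_ofDigits_le (b := 2) (n := k)
    (x := fun k => cond (s k) 1 0) (y := fun k => cond (t k) 1 0) fun i hi => by simp [h i hi]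

theorem continuous_binaryValue : Continuous binaryValue :=
  Real.continuous_ofDigits.comp <| continuous_pi fun k =>
    (continuous_of_discreteTopology (f := fun b : Bool => cond b (1 : Fin 2) 0)).comp
      (continuous_apply k)

theorem binaryValue_surjOn : SurjOn binaryValue univ (Icc 0 1) := by
  intro y hy
  obtain ⟨d, -, hd⟩ := Real.ofDigits_SurjOn (b := 2) one_lt_two hy
  refine ⟨fun k => d k = 1, trivial, ?_⟩
  rw [← hd, binaryValue]
  congr with k
  generalize d k = a
  fin_cases a <;> rfl

theorem binaryValue_const_true : binaryValue (fun _ => true) = 1 :=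
  Real.ofDigits_const_last_eq_one 1

theorem binaryValue_add_binaryValue_not (s : ℕ → Bool) :
    binaryValue s + binaryValue (fun k => !s k) = 1 := by
  rw [← binaryValue_const_true, binaryValue, binaryValue, binaryValue, Real.ofDigits,
    Real.ofDigits, Real.ofDigits, ← Summable.tsum_add Real.summable_ofDigitsTerm
    Real.summable_ofDigitsTerm]
  congr with k
  cases h : s k <;> simp [h, Real.ofDigitsTerm]

theorem eq_const_false_of_binaryValue_eq_zero {s : ℕ → Bool} (h : binaryValue s = 0) :
    s = fun _ => false := by
  funext k
  by_contra hk
  have hpos : (0 : ℝ) < prefixValue s (k + 1) / 2 ^ (k + 1) := by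
    have hk' : s k = true := by simpa using hk
    simp only [prefixValue, hk', Bool.toNat_true]
    positivity
  linarith [prefixValue_div_le_binaryValue s (k + 1)]

theorem eq_const_true_of_binaryValue_eq_one {s : ℕ → Bool} (h : binaryValue s = 1) :
    s = fun _ => true := by
  have := eq_const_false_of_binaryValue_eq_zero
    (by linarith [binaryValue_add_binaryValue_not s] : binaryValue (fun k => !s k) = 0)
  funext k
  simpa using congr_fun this k

theorem tails_eq_const_of_binaryValue_eq {s t : ℕ → Bool} {m : ℕ} (hm : ∀ i < m, s i = t i)
    (hs : s m = true) (ht : t m = false) (h : binaryValue s = binaryValue t) :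
    (fun i => s (i + (m + 1))) = (fun _ => false) ∧ (fun i => t (i + (m + 1))) = fun _ => true := by
  have hpre : prefixValue s m = prefixValue t m := prefixValue_congr hm
  rw [binaryValue_eq s (m + 1), binaryValue_eq t (m + 1)] at h
  simp only [prefixValue, hs, ht, hpre, Bool.toNat_true, Bool.toNat_false] at h
  rw [div_left_inj' (by positivity)] at h
  push_cast at h
  have h0 := binaryValue_nonneg fun i => s (i + (m + 1))
  have h1 := binaryValue_le_one fun i => t (i + (m + 1))
  exact ⟨eq_const_false_of_binaryValue_eq_zero (by linarith),
    eq_const_true_of_binaryValue_eq_one (by linarith)⟩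

theorem eventuallyConst_of_tail_eq {s : ℕ → Bool} {m : ℕ} {b : Bool}
    (h : (fun i => s (i + m)) = fun _ => b) : EventuallyConst s atTop :=
  eventuallyConst_atTop.2 ⟨m, fun j hj => by
    rw [← Nat.sub_add_cancel hj, congr_fun h (j - m), ← zero_add m, congr_fun h 0]⟩

theorem eq_or_eventuallyConst_of_binaryValue_eq {s t : ℕ → Bool}
    (h : binaryValue s = binaryValue t) :
    s = t ∨ EventuallyConst s atTop ∧ EventuallyConst t atTop := by
  by_cases hst : s = t
  · exact Or.inl hst
  right
  have hne : ∃ k, s k ≠ t k := Function.ne_iff.1 hst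
  have hm : ∀ i < Nat.find hne, s i = t i := fun i hi => not_not.1 (Nat.find_min hne hi)
  cases hs : s (Nat.find hne) <;> cases ht : t (Nat.find hne)
  · exact absurd (hs.trans ht.symm) (Nat.find_spec hne)
  · obtain ⟨h₁, h₂⟩ := tails_eq_const_of_binaryValue_eq (fun i hi => (hm i hi).symm) ht hs h.symm
    exact ⟨eventuallyConst_of_tail_eq h₂, eventuallyConst_of_tail_eq h₁⟩
  · obtain ⟨h₁, h₂⟩ := tails_eq_const_of_binaryValue_eq hm hs ht h
    exact ⟨eventuallyConst_of_tail_eq h₁, eventuallyConst_of_tail_eq h₂⟩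
  · exact absurd (hs.trans ht.symm) (Nat.find_spec hne)

def eventuallyConstSeqs : Set (ℕ → Bool) := {s | EventuallyConst s atTop}

theorem countable_eventuallyConstSeqs : eventuallyConstSeqs.Countable := by
  refine (Set.countable_range fun p : (Σ m, Fin m → Bool) × Bool =>
    fun k => if h : k < p.1.1 then p.1.2 ⟨k, h⟩ else p.2).mono fun s hs => ?_
  obtain ⟨m, hm⟩ := eventuallyConst_atTop.1 hs
  refine ⟨(⟨m, fun k => s k⟩, s m), funext fun k => ?_⟩
  dsimp only
  split_ifs with h
  exacts [rfl, (hm k (not_lt.1 h)).symm]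

theorem binaryValue_indicator_Ici (j : ℕ) : binaryValue (fun k => decide (j ≤ k)) = (2 ^ j)⁻¹ := by
  have hpre : prefixValue (fun k => decide (j ≤ k)) j = 0 := by
    suffices ∀ k ≤ j, prefixValue (fun k => decide (j ≤ k)) k = 0 from this j le_rfl
    intro k hk
    induction k with
    | zero => rfl
    | succ k ih => simp [prefixValue, ih (by omega), show ¬ j ≤ k by omega]
  rw [binaryValue_eq _ j, hpre]
  simp [binaryValue_const_true]

theorem infinite_binaryValue_image_eventuallyConstSeqs :
    (binaryValue '' eventuallyConstSeqs).Infinite := by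
  refine Set.infinite_of_injective_forall_mem (f := fun j : ℕ => ((2 : ℝ) ^ j)⁻¹)
    (fun i j h => ?_) fun j => ⟨_, ?_, binaryValue_indicator_Ici j⟩
  · simpa using h
  · exact eventuallyConst_of_tail_eq (m := j) (b := true) (funext fun i => by simp)

theorem binaryValue_mem_image_iff {s : ℕ → Bool} :
    binaryValue s ∈ binaryValue '' eventuallyConstSeqs ↔ s ∈ eventuallyConstSeqs := by
  refine ⟨fun ⟨t, ht, hts⟩ => ?_, fun hs => ⟨s, hs, rfl⟩⟩
  rcases eq_or_eventuallyConst_of_binaryValue_eq hts with rfl | h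
  exacts [ht, h.2]

def eventuallyConstEquiv : eventuallyConstSeqs ≃ binaryValue '' eventuallyConstSeqs :=
  Classical.choice <| by
    have := countable_eventuallyConstSeqs.to_subtype
    have := (countable_eventuallyConstSeqs.image binaryValue).to_subtype
    have := infinite_binaryValue_image_eventuallyConstSeqs.to_subtype
    have := (infinite_binaryValue_image_eventuallyConstSeqs.of_image _).to_subtype
    exact Cardinal.eq.1 ((Cardinal.mk_eq_aleph0 _).trans (Cardinal.mk_eq_aleph0 _).symm)

open Classical in
def binaryBijection (s : ℕ → Bool) : ℝ :=
  if h : s ∈ eventuallyConstSeqs then eventuallyConstEquiv ⟨s, h⟩ else binaryValue s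

theorem binaryBijection_of_mem {s : ℕ → Bool} (h : s ∈ eventuallyConstSeqs) :
    binaryBijection s = eventuallyConstEquiv ⟨s, h⟩ :=
  dif_pos h

theorem binaryBijection_of_not_mem {s : ℕ → Bool} (h : s ∉ eventuallyConstSeqs) :
    binaryBijection s = binaryValue s :=
  dif_neg h

theorem binaryBijection_mem_image_iff {s : ℕ → Bool} :
    binaryBijection s ∈ binaryValue '' eventuallyConstSeqs ↔ s ∈ eventuallyConstSeqs := by
  by_cases h : s ∈ eventuallyConstSeqs
  · simp only [binaryBijection_of_mem h, Subtype.coe_prop, h]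
  · rw [binaryBijection_of_not_mem h, binaryValue_mem_image_iff]

theorem binaryBijection_injective : Function.Injective binaryBijection := by
  intro s t hst
  have hmem : s ∈ eventuallyConstSeqs ↔ t ∈ eventuallyConstSeqs := by
    rw [← binaryBijection_mem_image_iff, hst, binaryBijection_mem_image_iff]
  by_cases hs : s ∈ eventuallyConstSeqs
  · have ht := hmem.1 hs
    rw [binaryBijection_of_mem hs, binaryBijection_of_mem ht] at hst
    exact congrArg Subtype.val (eventuallyConstEquiv.injective (Subtype.ext hst))
  · have ht : t ∉ eventuallyConstSeqs := hmem.not.1 hs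
    rw [binaryBijection_of_not_mem hs, binaryBijection_of_not_mem ht] at hst
    exact (eq_or_eventuallyConst_of_binaryValue_eq hst).resolve_right fun h => hs h.1

theorem range_binaryBijection : range binaryBijection = Icc 0 1 := by
  refine Subset.antisymm ?_ fun r hr => ?_
  · rintro _ ⟨s, rfl⟩
    by_cases hs : s ∈ eventuallyConstSeqs
    · obtain ⟨t, -, ht⟩ := (binaryBijection_mem_image_iff.2 hs)
      exact ht ▸ ⟨binaryValue_nonneg t, binaryValue_le_one t⟩
    · rw [binaryBijection_of_not_mem hs]
      exact ⟨binaryValue_nonneg s, binaryValue_le_one s⟩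
  obtain ⟨s, -, rfl⟩ := binaryValue_surjOn hr
  by_cases hs : s ∈ eventuallyConstSeqs
  · obtain ⟨t, ht⟩ := eventuallyConstEquiv.surjective ⟨binaryValue s, s, hs, rfl⟩
    exact ⟨t, by rw [binaryBijection_of_mem t.2, ht]⟩
  · exact ⟨s, binaryBijection_of_not_mem hs⟩

theorem measurable_binaryBijection : Measurable binaryBijection :=
  ContinuousOn.measurable_of_countable_compl (s := eventuallyConstSeqsᶜ)
    (continuous_binaryValue.continuousOn.congr fun _ hs => binaryBijection_of_not_mem hs)
    (by rw [compl_compl]; exact countable_eventuallyConstSeqs)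

theorem countable_range_binaryBijection_sub :
    (range fun s => binaryBijection s - binaryValue s).Countable := by
  refine ((countable_eventuallyConstSeqs.image fun s => binaryBijection s - binaryValue s).insert
    0).mono ?_
  rintro _ ⟨s, rfl⟩
  by_cases hs : s ∈ eventuallyConstSeqs
  · exact Or.inr ⟨s, hs, rfl⟩
  · exact Or.inl (by simp [binaryBijection_of_not_mem hs])

theorem prefixValue_mem_Icc {u : ℕ → Bool} {a δ : ℝ} {k : ℕ} (hu : |binaryValue u - a| ≤ δ)
    (hδ : δ ≤ 2 / 2 ^ k) :
    (prefixValue u k : ℤ) ∈ Icc (⌈2 ^ k * (a - δ)⌉ - 1) (⌈2 ^ k * (a - δ)⌉ + 4) := by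
  have hk : (0 : ℝ) < 2 ^ k := by positivity
  have hlo := prefixValue_div_le_binaryValue u k
  have hhi := binaryValue_le_prefixValue_add_one_div u k
  rw [div_le_iff₀ hk] at hlo
  rw [le_div_iff₀ hk] at hhi
  rw [le_div_iff₀ hk] at hδ
  obtain ⟨h₁, h₂⟩ := abs_le.1 hu
  constructor
  · have : ⌈2 ^ k * (a - δ)⌉ ≤ (prefixValue u k : ℤ) + 1 :=
      Int.ceil_le.2 (by push_cast; nlinarith)
    omega
  · exact_mod_cast (show (prefixValue u k : ℝ) ≤ ⌈2 ^ k * (a - δ)⌉ + 4 by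
      nlinarith [Int.le_ceil (2 ^ k * (a - δ))])

theorem exists_forall_lt_eq_of_not_subsingleton {U : Set Cantor} (hU : ¬U.Subsingleton) :
    ∃ m, (1 / 2 : ℝ) ^ m ≤ Metric.diam U ∧ ∀ x ∈ U, ∀ y ∈ U, ∀ i < m, x i = y i := by
  classical
  have hex : ∃ m, ∃ x ∈ U, ∃ y ∈ U, x ≠ y ∧ PiNat.firstDiff x y = m := by
    simp only [Set.Subsingleton, not_forall] at hU
    obtain ⟨x, hx, y, hy, hxy⟩ := hU
    exact ⟨_, x, hx, y, hy, hxy, rfl⟩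
  refine ⟨Nat.find hex, ?_, fun x hx y hy i hi => ?_⟩
  · obtain ⟨x, hx, y, hy, hxy, hm⟩ := Nat.find_spec hex
    rw [← hm, ← PiNat.dist_eq_of_ne hxy]
    exact Metric.dist_le_diam_of_mem Metric.isBounded_of_compactSpace hx hy
  · by_cases hxy : x = y
    · rw [hxy]
    · exact PiNat.apply_eq_of_lt_firstDiff
        (hi.trans_le (Nat.find_min' hex ⟨x, hx, y, hy, hxy, rfl⟩))

theorem exists_cover_image_of_dist_pow_le {Y : Type*} [PseudoMetricSpace Y] {n L : ℕ}
    {G : Cantor → Y} (hG : ∀ x y, dist (G x) (G y) ^ n ≤ 2 ^ L * dist x y) {U : Set Cantor}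
    (hU : ¬U.Subsingleton) (s : Set Cantor) :
    ∃ V : (Fin L → Bool) → Set Y, G '' (U ∩ s) ⊆ ⋃ w, V w ∧
      ∀ w, ∀ a ∈ V w, ∀ b ∈ V w, dist a b ^ n ≤ Metric.diam U := by
  obtain ⟨m, hm, hU⟩ := exists_forall_lt_eq_of_not_subsingleton hU
  refine ⟨fun w => G '' (U ∩ s ∩ {y | ∀ p : Fin L, y (m + p) = w p}), ?_, ?_⟩
  · rintro _ ⟨x, hx, rfl⟩
    exact mem_iUnion.2 ⟨fun p => x (m + p), x, ⟨hx, fun p => rfl⟩, rfl⟩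
  rintro w _ ⟨x, ⟨⟨hxU, -⟩, hxw⟩, rfl⟩ _ ⟨y, ⟨⟨hyU, -⟩, hyw⟩, rfl⟩
  have hxy : dist x y ≤ (1 / 2) ^ (m + L) := by
    refine PiNat.mem_cylinder_iff_dist_le.1 fun i hi => ?_
    by_cases him : i < m
    · exact hU x hxU y hyU i him
    · obtain ⟨p, rfl⟩ := Nat.exists_eq_add_of_le (not_lt.1 him)
      exact (hxw ⟨p, by omega⟩).trans (hyw ⟨p, by omega⟩).symm
  calc dist (G x) (G y) ^ n ≤ 2 ^ L * dist x y := hG x y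
    _ ≤ 2 ^ L * (1 / 2) ^ (m + L) := by gcongr
    _ = (1 / 2) ^ m := by rw [pow_add, mul_left_comm, ← mul_pow]; norm_num
    _ ≤ Metric.diam U := hm

variable {n : ℕ} [NeZero n]

variable (n) in
def strands : (ℕ → Bool) ≃ (Fin n → ℕ → Bool) where
  toFun x i k := x (k * n + i)
  invFun y j := y (Nat.divModEquiv n j).2 (Nat.divModEquiv n j).1
  left_inv x := funext fun j => by simp [Nat.div_add_mod']
  right_inv y := funext₂ fun i k => by
    simpa using congrArg (fun p : ℕ × Fin n => y p.2 p.1)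
      ((Nat.divModEquiv n).apply_symm_apply (k, i))

theorem strands_apply (x : ℕ → Bool) (i : Fin n) (k : ℕ) : strands n x i k = x (k * n + i) := rfl

theorem strands_eq_of_forall_lt {x y : ℕ → Bool} {N : ℕ} (h : ∀ j < N, x j = y j) (i : Fin n) :
    ∀ k < N / n, strands n x i k = strands n y i k := fun k hk => by
  have hkN := (Nat.le_div_iff_mul_le (Nat.pos_of_neZero n)).1 hk
  exact h _ (by rw [Nat.succ_mul] at hkN; omega)

theorem eq_of_strands_eq {x y : ℕ → Bool} {K : ℕ}
    (h : ∀ i, ∀ k < K, strands n x i k = strands n y i k) : ∀ j < K * n, x j = y j := by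
  intro j hj
  have := h (Nat.divModEquiv n j).2 (j / n) (Nat.div_lt_of_lt_mul (mul_comm K n ▸ hj))
  simpa [strands_apply, Nat.div_add_mod'] using this

theorem gaugeMeasure_image_le_of_dist_pow_le {Y : Type*} [MetricSpace Y] [MeasurableSpace Y]
    [BorelSpace Y] {L : ℕ} {G : Cantor → Y} (hG : ∀ x y, dist (G x) (G y) ^ n ≤ 2 ^ L * dist x y)
    {g : ℝ → ℝ} (hg : MonotoneOn g (Ici 0)) (hg0 : g 0 = 0) (s : Set Cantor) :
    gaugeMeasure (fun t => g (t ^ n)) (G '' s) ≤ 2 ^ L * gaugeMeasure g s := by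
  have hn : n ≠ 0 := NeZero.ne n
  refine Measure.mkMetric_le_mul_of_forall_cover (ι := Fin L → Bool) (by simp [hg0])
    (by simp) (by simp) (Φ := fun U => G '' (U ∩ s)) (fun u hu => ?_) fun r hr => ?_
  · rw [← image_iUnion, ← iUnion_inter]
    exact image_mono (subset_inter hu le_rfl)
  obtain ⟨ε, -, hε0, hεr⟩ := ENNReal.lt_iff_exists_real_btwn.1 hr
  have hε : 0 < ε := ENNReal.ofReal_pos.1 hε0
  have hn₀ : (0 : ℝ) < n := Nat.cast_pos.2 (Nat.pos_of_neZero n)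
  refine ⟨ENNReal.ofReal (ε ^ n), ENNReal.ofReal_pos.2 (pow_pos hε n), fun U hU => ?_⟩
  by_cases hsub : U.Subsingleton
  · have hdiam : Metric.ediam (G '' (U ∩ s)) = 0 :=
      Metric.ediam_eq_zero_iff.2 ((hsub.anti inter_subset_left).image G)
    refine ⟨fun _ => G '' (U ∩ s), subset_iUnion_of_subset (fun _ => false) le_rfl,
      fun _ => by simp [hdiam], by simp [hdiam, hg0, hn]⟩
  obtain ⟨V, hcover, hV⟩ := exists_cover_image_of_dist_pow_le hG hsub s
  have hdU : Metric.diam U ≤ ε ^ n := ENNReal.toReal_le_of_le_ofReal (by positivity) hU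
  have hVdist : ∀ w, ∀ a ∈ V w, ∀ b ∈ V w, dist a b ≤ Metric.diam U ^ (n⁻¹ : ℝ) :=
    fun w a ha b hb => (Real.le_rpow_inv_iff_of_pos dist_nonneg Metric.diam_nonneg hn₀).2
      (by rw [Real.rpow_natCast]; exact hV w a ha b hb)
  refine ⟨V, hcover, fun w => (Metric.ediam_le_of_forall_dist_le (hVdist w)).trans
    (le_trans (ENNReal.ofReal_le_ofReal ?_) hεr.le), ?_⟩
  · exact (Real.rpow_inv_le_iff_of_pos Metric.diam_nonneg hε.le hn₀).2
      (by rw [Real.rpow_natCast]; exact hdU)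
  calc ∑' w, ENNReal.ofReal (g (Metric.diam (V w) ^ n))
      ≤ ∑' _ : Fin L → Bool, ENNReal.ofReal (g (Metric.diam U)) := by
        refine ENNReal.tsum_le_tsum fun w => ENNReal.ofReal_le_ofReal
          (hg (mem_Ici.2 (by positivity)) (mem_Ici.2 Metric.diam_nonneg) ?_)
        calc Metric.diam (V w) ^ n ≤ (Metric.diam U ^ (n⁻¹ : ℝ)) ^ n :=
              pow_le_pow_left₀ Metric.diam_nonneg
                (Metric.diam_le_of_forall_dist_le (by positivity) (hVdist w)) n
          _ = Metric.diam U := Real.rpow_inv_natCast_pow Metric.diam_nonneg hn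
    _ = 2 ^ L * ENNReal.ofReal (g (Metric.diam U)) := by simp [tsum_fintype]

variable (n) in
def binaryCube (x : ℕ → Bool) : EuclideanSpace ℝ (Fin n) :=
  WithLp.toLp 2 fun i => binaryValue (strands n x i)

theorem binaryCube_apply (x : ℕ → Bool) (i : Fin n) :
    binaryCube n x i = binaryValue (strands n x i) := rfl

theorem dist_binaryCube_pow_le (x y : Cantor) :
    dist (binaryCube n x) (binaryCube n y) ^ n ≤ 2 ^ (n * n + n) * dist x y := by
  by_cases hxy : x = y
  · simp [hxy, NeZero.ne n]
  set N := PiNat.firstDiff x y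
  have hdist : dist (binaryCube n x) (binaryCube n y) ≤ n * (2 ^ (N / n))⁻¹ :=
    EuclideanSpace.dist_le_card_mul (by positivity) fun i => by
      rw [binaryCube_apply, binaryCube_apply, Real.dist_eq]
      exact abs_binaryValue_sub_le
        (strands_eq_of_forall_lt (fun j hj => PiNat.apply_eq_of_lt_firstDiff hj) i)
  have hn : (n : ℝ) ^ n ≤ 2 ^ (n * n) := by
    rw [pow_mul]
    gcongr
    exact_mod_cast Nat.lt_two_pow_self.le
  have hN : N ≤ N / n * n + n := by
    have := Nat.div_add_mod' N n
    have := Nat.mod_lt N (Nat.pos_of_neZero n)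
    omega
  have h2 : ((2 : ℝ) ^ (N / n * n))⁻¹ ≤ 2 ^ n * (1 / 2) ^ N := by
    calc ((2 : ℝ) ^ (N / n * n))⁻¹ = 2 ^ n * (2 ^ (N / n * n + n))⁻¹ := by
          rw [pow_add]; field_simp
      _ ≤ 2 ^ n * (2 ^ N)⁻¹ := by gcongr; exact one_le_two
      _ = 2 ^ n * (1 / 2) ^ N := by rw [one_div, inv_pow]
  rw [PiNat.dist_eq_of_ne hxy]
  calc dist (binaryCube n x) (binaryCube n y) ^ n ≤ (n * (2 ^ (N / n))⁻¹) ^ n :=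
        pow_le_pow_left₀ dist_nonneg hdist n
    _ = n ^ n * ((2 : ℝ) ^ (N / n * n))⁻¹ := by rw [mul_pow, inv_pow, ← pow_mul]
    _ ≤ 2 ^ (n * n) * (2 ^ n * (1 / 2) ^ N) := by gcongr
    _ = 2 ^ (n * n + n) * (1 / 2) ^ N := by ring

theorem prefixValue_strands_mem_piFinset {V : Set (EuclideanSpace ℝ (Fin n))}
    (hV : Bornology.IsBounded V) {p : EuclideanSpace ℝ (Fin n)} (hp : p ∈ V) {k : ℕ}
    (hd : Metric.diam V ≤ 2 / 2 ^ k) {x : ℕ → Bool} (hx : binaryCube n x ∈ V) :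
    (fun i => (prefixValue (strands n x i) k : ℤ)) ∈ Fintype.piFinset fun i =>
      Finset.Icc (⌈2 ^ k * (p i - Metric.diam V)⌉ - 1) (⌈2 ^ k * (p i - Metric.diam V)⌉ + 4) :=
  Fintype.mem_piFinset.2 fun i => Finset.mem_Icc.2 <| prefixValue_mem_Icc
    (by simpa [binaryCube_apply, Real.dist_eq] using
      (PiLp.dist_apply_le _ _ i).trans (Metric.dist_le_diam_of_mem hV hx hp)) hd

theorem dist_le_of_prefixValue_strands_eq {x y : Cantor} {k : ℕ}
    (h : ∀ i, prefixValue (strands n x i) k = prefixValue (strands n y i) k) :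
    dist x y ≤ (1 / 2) ^ (k * n) :=
  PiNat.mem_cylinder_iff_dist_le.1 fun j hj =>
    eq_of_strands_eq (fun i => eq_of_prefixValue_eq (h i)) j hj

theorem exists_cover_preimage_binaryCube {V : Set (EuclideanSpace ℝ (Fin n))}
    (hVb : Bornology.IsBounded V) (hV : ¬V.Subsingleton) (hd : Metric.diam V ≤ 1)
    (s : Set Cantor) :
    ∃ W : (Fin n → ℤ) → Set Cantor, ∃ F : Finset (Fin n → ℤ), F.card = 6 ^ n ∧
      (∀ z ∉ F, W z = ∅) ∧ s ∩ binaryCube n ⁻¹' V ⊆ ⋃ z, W z ∧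
      ∀ z, ∀ x ∈ W z, ∀ y ∈ W z, dist x y ≤ Metric.diam V ∧ dist x y ≤ Metric.diam V ^ n := by
  obtain ⟨a, ha, b, hb, hab⟩ : ∃ a ∈ V, ∃ b ∈ V, a ≠ b := by
    simpa [Set.Subsingleton] using hV
  have hd0 : 0 < Metric.diam V :=
    (dist_pos.2 hab).trans_le (Metric.dist_le_diam_of_mem hVb ha hb)
  obtain ⟨k, hk₁, hk₂⟩ := exists_nat_pow_near_of_lt_one hd0 hd one_half_pos one_half_lt_one
  have hwin : Metric.diam V ≤ 2 / 2 ^ (k + 1) := by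
    rw [pow_succ, div_mul_cancel_right₀ two_ne_zero]
    simpa only [one_div, inv_pow] using hk₂
  refine ⟨fun z => {x ∈ s | binaryCube n x ∈ V ∧
      ∀ i, (prefixValue (strands n x i) (k + 1) : ℤ) = z i},
    Fintype.piFinset fun i => Finset.Icc (⌈2 ^ (k + 1) * (a i - Metric.diam V)⌉ - 1)
      (⌈2 ^ (k + 1) * (a i - Metric.diam V)⌉ + 4), ?_, fun z hz => ?_,
    fun x hx => mem_iUnion.2 ⟨_, hx.1, hx.2, fun _ => rfl⟩, fun z x hx y hy => ?_⟩
  · simp [Fintype.card_piFinset, show ∀ c : ℤ, c + 4 + 1 - (c - 1) = 6 from fun c => by ring]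
  · refine eq_empty_of_forall_notMem fun x hx => hz ?_
    convert prefixValue_strands_mem_piFinset hVb ha hwin hx.2.1 using 1
    exact funext fun i => (hx.2.2 i).symm
  have hxy : dist x y ≤ ((1 / 2) ^ (k + 1)) ^ n := by
    rw [← pow_mul]
    exact dist_le_of_prefixValue_strands_eq fun i => by
      exact_mod_cast (hx.2.2 i).trans (hy.2.2 i).symm
  refine ⟨hxy.trans ((pow_le_of_le_one (by positivity) (pow_le_one₀ (by norm_num) (by norm_num))
    (NeZero.ne n)).trans hk₁.le), hxy.trans (pow_le_pow_left₀ (by positivity) hk₁.le n)⟩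

theorem gaugeMeasure_le_of_injOn_binaryCube {g : ℝ → ℝ} (hg : MonotoneOn g (Ici 0))
    (hg0 : g 0 = 0) {s : Set Cantor} (hs : InjOn (binaryCube n) s) :
    gaugeMeasure g s ≤ 6 ^ n * gaugeMeasure (fun t => g (t ^ n)) (binaryCube n '' s) := by
  refine Measure.mkMetric_le_mul_of_forall_cover (ι := Fin n → ℤ) (by simp [hg0, NeZero.ne n])
    (by simp) (by simp) (Φ := fun V => s ∩ binaryCube n ⁻¹' V) (fun u hu x hx => ?_)
    fun r hr => ?_
  · obtain ⟨k, hk⟩ := mem_iUnion.1 (hu ⟨x, hx, rfl⟩)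
    exact mem_iUnion.2 ⟨k, hx, hk⟩
  obtain ⟨ε, -, hε0, hεr⟩ := ENNReal.lt_iff_exists_real_btwn.1 hr
  have hε : 0 < ε := ENNReal.ofReal_pos.1 hε0
  refine ⟨ENNReal.ofReal (min ε 1), ENNReal.ofReal_pos.2 (lt_min hε one_pos), fun V hV => ?_⟩
  by_cases hsub : V.Subsingleton
  · have hdiam : Metric.ediam (s ∩ binaryCube n ⁻¹' V) = 0 :=
      Metric.ediam_eq_zero_iff.2 fun x hx y hy => hs hx.1 hy.1 (hsub hx.2 hy.2)
    exact ⟨fun _ => s ∩ binaryCube n ⁻¹' V, subset_iUnion_of_subset 0 le_rfl,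
      fun _ => by simp [hdiam], by simp [hdiam, hg0]⟩
  have hVb : Bornology.IsBounded V :=
    Metric.isBounded_iff_ediam_ne_top.2 (hV.trans_lt ENNReal.ofReal_lt_top).ne
  have hd : Metric.diam V ≤ min ε 1 := ENNReal.toReal_le_of_le_ofReal (by positivity) hV
  obtain ⟨W, F, hF, hWF, hcover, hW⟩ :=
    exists_cover_preimage_binaryCube hVb hsub (hd.trans (min_le_right _ _)) s
  refine ⟨W, hcover, fun z => (Metric.ediam_le_of_forall_dist_le fun x hx y hy =>
    (hW z x hx y hy).1.trans (hd.trans (min_le_left _ _))).trans hεr.le, ?_⟩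
  calc ∑' z, ENNReal.ofReal (g (Metric.diam (W z)))
      = ∑ z ∈ F, ENNReal.ofReal (g (Metric.diam (W z))) :=
        tsum_eq_sum fun z hz => by simp [hWF z hz, hg0]
    _ ≤ ∑ _z ∈ F, ENNReal.ofReal (g (Metric.diam V ^ n)) :=
        Finset.sum_le_sum fun z _ => ENNReal.ofReal_le_ofReal <|
          hg (mem_Ici.2 Metric.diam_nonneg) (mem_Ici.2 (by positivity)) <|
            Metric.diam_le_of_forall_dist_le (by positivity) fun x hx y hy => (hW z x hx y hy).2
    _ = 6 ^ n * ENNReal.ofReal (g (Metric.diam V ^ n)) := by simp [hF]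

variable (n) in
def cubeMap (x : ℕ → Bool) : EuclideanSpace ℝ (Fin n) :=
  WithLp.toLp 2 fun i => binaryBijection (strands n x i)

theorem measurable_cubeMap : Measurable (cubeMap n : Cantor → _) :=
  (MeasurableEquiv.toLp 2 _).measurable.comp <| measurable_pi_lambda _ fun _ =>
    measurable_binaryBijection.comp (continuous_pi fun _ => continuous_apply _).measurable

theorem cubeMap_injective : Function.Injective (cubeMap n) := fun _ _ h =>
  (strands n).injective <| funext fun i => binaryBijection_injective (congrArg (· i) h)

theorem range_cubeMap : range (cubeMap n) = unitCube n := by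
  refine Subset.antisymm ?_ fun p hp => ?_
  · rintro _ ⟨x, rfl⟩ i
    exact range_binaryBijection ▸ mem_range_self _
  choose s hs using fun i => (range_binaryBijection ▸ hp i : p i ∈ range binaryBijection)
  exact ⟨(strands n).symm s, by ext i; simp [cubeMap, hs]⟩

theorem countable_range_cubeMap_sub_binaryCube :
    (range fun x => cubeMap n x - binaryCube n x).Countable := by
  refine ((countable_pi fun _ => countable_range_binaryBijection_sub).preimage
    (WithLp.ofLp_injective 2)).mono ?_
  rintro _ ⟨x, rfl⟩ i
  exact ⟨strands n x i, rfl⟩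

theorem gaugeMeasure_image_cubeMap_eq_zero_iff {g : ℝ → ℝ} (hg : MonotoneOn g (Ici 0))
    (hg0 : g 0 = 0) (A : Set Cantor) :
    gaugeMeasure (fun t => g (t ^ n)) (cubeMap n '' A) = 0 ↔ gaugeMeasure g A = 0 := by
  set c := fun x => cubeMap n x - binaryCube n x
  have hA : A = ⋃ v ∈ range c, A ∩ c ⁻¹' {v} := by
    rw [← inter_iUnion₂, biUnion_preimage_singleton, preimage_range, inter_univ]
  rw [hA, image_iUnion₂, measure_biUnion_null_iff countable_range_cubeMap_sub_binaryCube,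
    measure_biUnion_null_iff countable_range_cubeMap_sub_binaryCube]
  refine forall₂_congr fun v _ => ?_
  have hcube : ∀ x ∈ A ∩ c ⁻¹' {v}, cubeMap n x = binaryCube n x + v := fun x hx => by
    rw [← hx.2]; exact (add_sub_cancel _ _).symm
  have hinj : InjOn (binaryCube n) (A ∩ c ⁻¹' {v}) := fun x hx y hy h =>
    cubeMap_injective (by rw [hcube x hx, hcube y hy, h])
  have htrans : ∀ S, gaugeMeasure (fun t => g (t ^ n)) ((· + v) '' S) =
      gaugeMeasure (fun t => g (t ^ n)) S :=
    Measure.mkMetric_image_of_isometry _ (isometry_add_right v) (add_right_surjective v)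
  rw [image_congr hcube, ← image_image (· + v), htrans]
  exact ⟨fun h => nonpos_iff_eq_zero.1 <|
      (gaugeMeasure_le_of_injOn_binaryCube hg hg0 hinj).trans (by rw [h, mul_zero]),
    fun h => nonpos_iff_eq_zero.1 <|
      (gaugeMeasure_image_le_of_dist_pow_le dist_binaryCube_pow_le hg hg0 _).trans
        (by rw [h, mul_zero])⟩

end Cantor

/-- For every `n ≥ 1` there is a Borel bijection `f : 2^ω → [0,1]^n` such that for every set
`A ⊆ 2^ω` and every gauge function `g`, `H^g(A) > 0` iff `H^{g∘h⁻¹}(f(A)) > 0`, where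
`h(t) = t^{1/n}`, so that `g ∘ h⁻¹ (t) = g (t^n)`. -/
theorem exists_borel_bijection_cantor_cube (n : ℕ) (hn : 1 ≤ n) :
    ∃ f : Cantor → EuclideanSpace ℝ (Fin n),
      Measurable f ∧ Function.Injective f ∧ Set.range f = unitCube n ∧
      ∀ g : ℝ → ℝ, IsGauge g → ∀ A : Set Cantor,
        (0 < gaugeMeasure g A ↔ 0 < gaugeMeasure (fun t => g (t ^ n)) (f '' A)) := by
  have : NeZero n := ⟨by omega⟩
  refine ⟨Cantor.cubeMap n, Cantor.measurable_cubeMap, Cantor.cubeMap_injective,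
    Cantor.range_cubeMap, fun g hg A => ?_⟩
  simp only [pos_iff_ne_zero]
  exact (Cantor.gaugeMeasure_image_cubeMap_eq_zero_iff hg.mono hg.zero A).symm.not
end
end
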